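/- For a symmetric Kripke model N = (W,R,V) over agents a,b, let N* = (W,R*,V) where R*(a) and R*(b) are the reflexive-transitive closures of R(a), R(b). Suppose N,w ⊨ (⋀_{χ∈μ(φ)} χ) ∧ C_{{a,b}}(⋀_{χ∈μ(φ)} χ), where μ(φ) contains K_i ψ → K_i K_i ψ and K_i ψ → ψ for i ∈ {a,b} and all ψ in cl(φ) extended with common-knowledge formulas over subgroups of {a,b}. Then N* is an S5 model, and for every ψ ∈ cl(φ) and every world u with u = w or u reachable from w by an {a,b}-path in N: N,u ⊨ ψ iff N*,u ⊨ ψ. -/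

import Mathlib

/-- Two-agent epistemic formulas with common knowledge: the agents are `false` (= `a`) and
`true` (= `b`). -/
inductive FormC (P : Type) where
  | atom : P → FormC P
  | bot : FormC P
  | neg : FormC P → FormC P
  | impl : FormC P → FormC P → FormC P
  | K : Bool → FormC P → FormC P
  | Ck : Finset Bool → FormC P → FormC P

/-- Kripke satisfaction; common knowledge via nonempty paths along `⋃_{i∈G} R i`. -/
def ksat {W P : Type} (R : Bool → W → W → Prop) (V : W → P → Prop) : FormC P → W → Prop
  | .atom p, w => V w p
  | .bot, _ => False
  | .neg φ, w => ¬ ksat R V φ w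
  | .impl φ ψ, w => ksat R V φ w → ksat R V ψ w
  | .K i φ, w => ∀ u, R i w u → ksat R V φ u
  | .Ck G φ, w => ∀ u, Relation.TransGen (fun x y => ∃ i ∈ G, R i x y) w u → ksat R V φ u

/-- The subformulas of a formula. -/
def sub {P : Type} : FormC P → List (FormC P)
  | .atom p => [.atom p]
  | .bot => [.bot]
  | .neg φ => .neg φ :: sub φ
  | .impl φ ψ => .impl φ ψ :: (sub φ ++ sub ψ)
  | .K i φ => .K i φ :: sub φ
  | .Ck G φ => .Ck G φ :: sub φ

/-- The closure `cl(φ)`: subformulas, their negations, `⊤` and `⊥`. -/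
def cl {P : Type} (φ : FormC P) : List (FormC P) :=
  sub φ ++ (sub φ).map .neg ++ [.neg .bot, .bot]

/-- The nonempty subgroups of `{a, b}`. -/
def groupsList : List (Finset Bool) := [{false}, {true}, {false, true}]

/-- `cl(φ)` extended with the formulas `C_G χ` for `χ ∈ cl(φ)` and `∅ ≠ G ⊆ {a,b}`. -/
def clC {P : Type} (φ : FormC P) : List (FormC P) :=
  cl φ ++ groupsList.flatMap (fun G => (cl φ).map (.Ck G))

/-- `μ(φ)`: the formulas `K_i ψ → K_i K_i ψ` and `K_i ψ → ψ` for `i ∈ {a,b}` and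
`ψ ∈ cl(φ) ∪ {C_G χ : χ ∈ cl(φ), ∅ ≠ G ⊆ {a,b}}`. -/
def mu {P : Type} (φ : FormC P) : List (FormC P) :=
  [false, true].flatMap fun i =>
    (clC φ).flatMap fun ψ =>
      [.impl (.K i ψ) (.K i (.K i ψ)), .impl (.K i ψ) ψ]

/-- Conjunction, defined from `¬` and `→`. -/
def andF {P : Type} (φ ψ : FormC P) : FormC P := .neg (.impl φ (.neg ψ))

/-- Conjunction of a list of formulas. -/
def conj {P : Type} (l : List (FormC P)) : FormC P := l.foldr andF (.neg .bot)

/-! The T- and 4-axioms for `K_i` hold at every world reachable from `w`, so along any `R i`-path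
knowledge of a formula is carried forward by 4 and becomes truth by T: passing to the
reflexive-transitive closures changes no `K_i` formula. For `C_G` the only new paths are the
empty ones, and seriality (T for `⊥`) together with symmetry turns those into loops `u → t → u`
of the original model. -/

open Relation

section Semantics

variable {P W : Type} {R : Bool → W → W → Prop} {V : W → P → Prop}

@[simp]
lemma ksat_andF {φ ψ : FormC P} {w : W} :
    ksat R V (andF φ ψ) w ↔ ksat R V φ w ∧ ksat R V ψ w := by
  simp only [andF, ksat]
  tauto

@[simp]
lemma ksat_conj {l : List (FormC P)} {w : W} :
    ksat R V (conj l) w ↔ ∀ χ ∈ l, ksat R V χ w := by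
  induction l with
  | nil => simp [conj, ksat]
  | cons c l ih => simp [conj, ← ih]

lemma exists_rel_of_ksat_T_bot {i : Bool} {u : W}
    (h : ksat R V (.impl (.K i .bot) .bot) u) : ∃ v, R i u v := by
  by_contra! hu
  exact h fun v huv => hu v huv

lemma mem_of_reflTransGen {r : W → W → Prop} {S : Set W}
    (hS : ∀ u ∈ S, ∀ v, r u v → v ∈ S) {u v : W} (hu : u ∈ S) (huv : ReflTransGen r u v) :
    v ∈ S := by
  induction huv with
  | refl => exact hu
  | tail _ hbc ih => exact hS _ ih _ hbc

lemma ksat_K_of_reflTransGen {S : Set W} {i : Bool} {χ : FormC P}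
    (hS : ∀ u ∈ S, ∀ v, R i u v → v ∈ S)
    (h4 : ∀ u ∈ S, ksat R V (.K i χ) u → ksat R V (.K i (.K i χ)) u)
    {u v : W} (hu : u ∈ S) (hK : ksat R V (.K i χ) u) (huv : ReflTransGen (R i) u v) :
    ksat R V (.K i χ) v := by
  induction huv with
  | refl => exact hK
  | tail hub hbc ih => exact h4 _ (mem_of_reflTransGen hS hu hub) ih _ hbc

lemma symmetric_reflTransGen {r : W → W → Prop} (hsymm : Symmetric r) :
    Symmetric (ReflTransGen r) :=
  fun _ _ h => reflTransGen_swap.mp (ReflTransGen.mono (fun _ _ h' => hsymm h') _ _ h)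

lemma transGen_self_of_symmetric {r : W → W → Prop} (hsymm : Symmetric r) {u t : W}
    (hut : r u t) : TransGen r u u :=
  .head hut (.single (hsymm hut))

theorem ksat_iff_ksat_reflTransGen {S : Set W} (hsymm : ∀ i, Symmetric (R i))
    (hS : ∀ i, ∀ u ∈ S, ∀ v, R i u v → v ∈ S) (hserial : ∀ i, ∀ u ∈ S, ∃ v, R i u v)
    (ψ : FormC P)
    (hax : ∀ i χ, .K i χ ∈ sub ψ → ∀ u ∈ S,
      ksat R V (.impl (.K i χ) (.K i (.K i χ))) u ∧ ksat R V (.impl (.K i χ) χ) u) :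
    ∀ u ∈ S, ksat R V ψ u ↔ ksat (fun i => ReflTransGen (R i)) V ψ u := by
  induction ψ with
  | atom p => exact fun _ _ => Iff.rfl
  | bot => exact fun _ _ => Iff.rfl
  | neg χ ih =>
    have ih := ih fun i θ h => hax i θ (by simp [sub, h])
    exact fun u hu => not_congr (ih u hu)
  | impl χ₁ χ₂ ih₁ ih₂ =>
    have ih₁ := ih₁ fun i θ h => hax i θ (by simp [sub, h])
    have ih₂ := ih₂ fun i θ h => hax i θ (by simp [sub, h])
    exact fun u hu => imp_congr (ih₁ u hu) (ih₂ u hu)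
  | K i χ ih =>
    have ih := ih fun j θ h => hax j θ (by simp [sub, h])
    have h4χ := fun u hu => (hax i χ (by simp [sub]) u hu).1
    have hTχ := fun u hu => (hax i χ (by simp [sub]) u hu).2
    intro u hu
    constructor
    · intro hK v huv
      have hv := mem_of_reflTransGen (hS i) hu huv
      exact (ih v hv).mp (hTχ v hv (ksat_K_of_reflTransGen (hS i) h4χ hu hK huv))
    · exact fun hK v huv => (ih v (hS i u hu v huv)).mpr (hK v (.single huv))
  | Ck G χ ih =>
    have ih := ih fun j θ h => hax j θ (by simp [sub, h])
    have hSG : ∀ u ∈ S, ∀ v, (∃ j ∈ G, R j u v) → v ∈ S := fun u hu v ⟨j, _, huv⟩ =>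
      hS j u hu v huv
    intro u hu
    constructor
    · intro hC v huv
      -- an `N*`-path is an `N`-path, possibly of length zero
      have hpath : ReflTransGen (fun x y => ∃ j ∈ G, R j x y) u v :=
        reflTransGen_closed (fun x y ⟨j, hj, hxy⟩ =>
          ReflTransGen.mono (fun _ _ h => ⟨j, hj, h⟩) x y hxy) u v huv.to_reflTransGen
      rcases reflTransGen_iff_eq_or_transGen.mp hpath with rfl | htrans
      · obtain ⟨_, ⟨j, hj, -⟩, -⟩ := TransGen.head'_iff.mp huv
        obtain ⟨t, hvt⟩ := hserial j v hu
        exact (ih v hu).mp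
          (hC v (transGen_self_of_symmetric (fun _ _ ⟨k, hk, h⟩ => ⟨k, hk, hsymm k h⟩)
            (⟨j, hj, hvt⟩ : ∃ k ∈ G, R k v t)))
      · exact (ih v (mem_of_reflTransGen hSG hu htrans.to_reflTransGen)).mp (hC v htrans)
    · intro hC v huv
      exact (ih v (mem_of_reflTransGen hSG hu huv.to_reflTransGen)).mpr
        (hC v (TransGen.mono (fun _ _ ⟨j, hj, h⟩ => ⟨j, hj, .single h⟩) u v huv))

end Semantics

section Closure

variable {P : Type}

lemma mem_sub_self (ψ : FormC P) : ψ ∈ sub ψ := by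
  cases ψ <;> simp [sub]

lemma sub_subset_of_mem_sub {ψ χ : FormC P} (h : χ ∈ sub ψ) : sub χ ⊆ sub ψ := by
  induction ψ with
  | atom p | bot => simp_all [sub]
  | neg θ ih | K i θ ih | Ck G θ ih =>
    rcases List.mem_cons.mp h with rfl | h
    · exact List.Subset.refl _
    · exact List.Subset.trans (ih h) (List.subset_cons_self _ _)
  | impl θ₁ θ₂ ih₁ ih₂ =>
    rcases List.mem_cons.mp h with rfl | h
    · exact List.Subset.refl _
    rcases List.mem_append.mp h with h | h
    · exact List.Subset.trans (ih₁ h) fun _ h => by simp [sub, h]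
    · exact List.Subset.trans (ih₂ h) fun _ h => by simp [sub, h]

lemma sub_subset_cl_of_mem_cl {φ ψ : FormC P} (h : ψ ∈ cl φ) : sub ψ ⊆ cl φ := by
  simp only [cl, List.mem_append, List.mem_map, List.mem_cons, List.not_mem_nil,
    or_false] at h
  rcases h with (h | ⟨θ, hθ, rfl⟩) | rfl | rfl
  · exact fun χ hχ => by simp [cl, sub_subset_of_mem_sub h hχ]
  · intro χ hχ
    rcases List.mem_cons.mp hχ with rfl | hχ
    · simp [cl, hθ]
    · simp [cl, sub_subset_of_mem_sub hθ hχ]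
  all_goals intro χ hχ; simp_all [sub, cl]

lemma mem_cl_of_K_mem_sub {φ ψ χ : FormC P} {i : Bool} (hψ : ψ ∈ cl φ)
    (h : .K i χ ∈ sub ψ) : χ ∈ cl φ :=
  sub_subset_cl_of_mem_cl (sub_subset_cl_of_mem_cl hψ h) (by simp [sub, mem_sub_self])

lemma cl_subset_clC {φ : FormC P} : cl φ ⊆ clC φ :=
  List.subset_append_left _ _

lemma axioms_mem_mu {φ ψ : FormC P} (h : ψ ∈ clC φ) (i : Bool) :
    .impl (.K i ψ) (.K i (.K i ψ)) ∈ mu φ ∧ .impl (.K i ψ) ψ ∈ mu φ := by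
  constructor <;>
  · simp only [mu, List.mem_flatMap, List.mem_cons]
    exact ⟨i, by cases i <;> simp, ψ, h, by simp⟩

lemma bot_mem_clC {φ : FormC P} : (.bot : FormC P) ∈ clC φ := by
  simp [clC, cl]

end Closure

theorem reflexive_transitive_closure_preserves_truth_general
    (P W : Type) (R : Bool → W → W → Prop)
    (hsymm : ∀ i, Symmetric (R i)) (V : W → P → Prop) (w : W) (φ : FormC P)
    (hsat : ksat R V (andF (conj (mu φ)) (.Ck {false, true} (conj (mu φ)))) w) :
    (∀ i, Reflexive (Relation.ReflTransGen (R i)) ∧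
        Symmetric (Relation.ReflTransGen (R i)) ∧
        Transitive (Relation.ReflTransGen (R i))) ∧
    (∀ ψ ∈ cl φ, ∀ u : W,
      (u = w ∨ Relation.TransGen (fun x y => ∃ i : Bool, R i x y) w u) →
      (ksat R V ψ u ↔ ksat (fun i => Relation.ReflTransGen (R i)) V ψ u)) := by
  refine ⟨fun i => ⟨fun _ => .refl, symmetric_reflTransGen (hsymm i), fun _ _ _ => .trans⟩,
    fun ψ hψ u hu => ?_⟩
  let S : Set W := {u | ReflTransGen (fun x y => ∃ i, R i x y) w u}
  have hS : ∀ i, ∀ u ∈ S, ∀ v, R i u v → v ∈ S := fun i _ hu _ huv => hu.tail ⟨i, huv⟩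
  have hmu : ∀ u ∈ S, ∀ χ ∈ mu φ, ksat R V χ u := by
    have hall : ∀ i : Bool, i ∈ ({false, true} : Finset Bool) := by decide
    simp only [ksat_andF, ksat_conj, ksat, hall, true_and] at hsat
    intro u hu
    rcases reflTransGen_iff_eq_or_transGen.mp hu with rfl | hu
    exacts [hsat.1, hsat.2 u hu]
  have hserial : ∀ i, ∀ u ∈ S, ∃ v, R i u v := fun i u hu =>
    exists_rel_of_ksat_T_bot (hmu u hu _ (axioms_mem_mu bot_mem_clC i).2)
  refine ksat_iff_ksat_reflTransGen hsymm hS hserial ψ (fun i χ hχ u hu => ?_) u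
    (reflTransGen_iff_eq_or_transGen.mpr hu)
  exact (axioms_mem_mu (cl_subset_clC (mem_cl_of_K_mem_sub hψ hχ)) i).imp
    (hmu u hu _) (hmu u hu _)

/-- For a symmetric two-agent Kripke model `N = (W,R,V)` satisfying
`(⋀ μ(φ)) ∧ C_{{a,b}} (⋀ μ(φ))` at `w`, the model `N* = (W,R*,V)` whose relations are the
reflexive-transitive closures of those of `N` is an S5 model, and truth of every
`ψ ∈ cl(φ)` is preserved at `w` and at every world reachable from `w` by an `{a,b}`-path. -/
theorem reflexive_transitive_closure_preserves_truth
    (P W : Type) [Nonempty W] (R : Bool → W → W → Prop)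
    (hsymm : ∀ i, Symmetric (R i)) (V : W → P → Prop) (w : W) (φ : FormC P)
    (hsat : ksat R V (andF (conj (mu φ)) (.Ck {false, true} (conj (mu φ)))) w) :
    (∀ i, Reflexive (Relation.ReflTransGen (R i)) ∧
        Symmetric (Relation.ReflTransGen (R i)) ∧
        Transitive (Relation.ReflTransGen (R i))) ∧
    (∀ ψ ∈ cl φ, ∀ u : W,
      (u = w ∨ Relation.TransGen (fun x y => ∃ i : Bool, R i x y) w u) →
      (ksat R V ψ u ↔ ksat (fun i => Relation.ReflTransGen (R i)) V ψ u)) :=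
  reflexive_transitive_closure_preserves_truth_general P W R hsymm V w φ hsat
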